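/- Let 0 ≤ σ < 1/2 and 0 < ε < 1/4. Then there is a constant C > 0 such that for every k ∈ ℤ, ∑_{n∈ℤ} ⟨n+k⟩^{2σ} ⟨n⟩^{-2σ} ⟨k² + (n+k)² + n²⟩^{-(1-2ε)} ≤ C ⟨k⟩^{-(1-4ε)}. -/

import Mathlib

/-!
Split the sum at `|n| = |k|`. Since `⟨k² + (n+k)² + n²⟩ ≳ max(⟨k⟩, ⟨n⟩)²` and
`⟨n+k⟩ ≲ max(⟨k⟩, ⟨n⟩)`, the terms with `|n| ≤ |k|` are `≲ ⟨k⟩^{2σ-2+4ε} ⟨n⟩^{-2σ}`, and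
`∑_{|n| ≤ |k|} ⟨n⟩^{-2σ} ≲ ⟨k⟩^{1-2σ}` because `2σ < 1`; the terms with `|n| > |k|` are
`≲ ⟨k⟩^{-s} ⟨n⟩^{-(1+s)}` with `s = 1/2 - 2ε > 0`, and `∑_{|n| > |k|} ⟨n⟩^{-(1+s)} ≲ ⟨k⟩^{-s}`.
The two one-dimensional sums are bounded by telescoping, Bernoulli's inequality supplying the
discrete analogues `t m^{t-1} ≤ m^t - (m-1)^t` (`0 ≤ t ≤ 1`) and
`(p-1) m^{-p} ≤ (m-1)^{1-p} - m^{1-p}` (`p ≥ 1`) of the integrals of `x^{-2σ}` and `x^{-(1+s)}`.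
-/

/-- The Japanese bracket `⟨x⟩ = (1 + x²)^{1/2}`. -/
noncomputable def jb (x : ℝ) : ℝ := Real.sqrt (1 + x ^ 2)

open Real Finset

lemma jb_sq (x : ℝ) : jb x ^ 2 = 1 + x ^ 2 := sq_sqrt (by positivity)

lemma one_le_jb (x : ℝ) : 1 ≤ jb x := one_le_sqrt.2 (by nlinarith [sq_nonneg x])

lemma jb_pos (x : ℝ) : 0 < jb x := one_pos.trans_le (one_le_jb x)

lemma abs_le_jb (x : ℝ) : |x| ≤ jb x := abs_le_sqrt (by linarith)

lemma le_jb (x : ℝ) : x ≤ jb x := (le_abs_self x).trans (abs_le_jb x)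

lemma jb_le_jb {x y : ℝ} (h : |x| ≤ |y|) : jb x ≤ jb y :=
  sqrt_le_sqrt (by nlinarith [sq_le_sq.2 h])

lemma jb_natAbs (n : ℤ) : jb (n.natAbs : ℝ) = jb n := by
  rw [Nat.cast_natAbs, Int.cast_abs, jb, jb, sq_abs]

lemma abs_intCast_le_abs_intCast {n k : ℤ} (h : n.natAbs ≤ k.natAbs) : |(n : ℝ)| ≤ |(k : ℝ)| :=
  sq_le_sq.1 (by exact_mod_cast Int.natAbs_le_iff_sq_le.1 h)

lemma jb_add_le (x y : ℝ) : jb (x + y) ≤ jb x + jb y := by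
  refine sqrt_le_left (by linarith [jb_pos x, jb_pos y]) |>.2 ?_
  have hxy : x * y ≤ jb x * jb y := (le_abs_self _).trans <| by
    rw [abs_mul]; exact mul_le_mul (abs_le_jb x) (abs_le_jb y) (abs_nonneg y) (jb_pos x).le
  nlinarith [jb_sq x, jb_sq y]

lemma jb_le_add_one {x : ℝ} (hx : 0 ≤ x) : jb x ≤ x + 1 :=
  sqrt_le_left (by linarith) |>.2 (by nlinarith)

lemma add_one_le_two_mul_jb (x : ℝ) : x + 1 ≤ 2 * jb x := by
  linarith [le_jb x, one_le_jb x]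

lemma jb_sq_le_two_mul_jb {x y : ℝ} (h : x ^ 2 ≤ y) : jb x ^ 2 ≤ 2 * jb y := by
  rw [jb_sq]
  linarith [one_le_jb y, le_jb y]

lemma mul_rpow_sub_one_le_rpow_sub_rpow {t x : ℝ} (ht0 : 0 ≤ t) (ht1 : t ≤ 1) (hx : 1 ≤ x) :
    t * x ^ (t - 1) ≤ x ^ t - (x - 1) ^ t := by
  have hx0 : 0 < x := one_pos.trans_le hx
  have hx1 : -1 ≤ -x⁻¹ := by linarith [inv_le_one_of_one_le₀ hx]
  have bernoulli : (1 + -x⁻¹) ^ t ≤ 1 + t * -x⁻¹ := rpow_one_add_le_one_add_mul_self hx1 ht0 ht1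
  have hsplit : x - 1 = x * (1 + -x⁻¹) := by field_simp; ring
  rw [hsplit, mul_rpow hx0.le (by linarith), rpow_sub_one hx0.ne']
  have := mul_le_mul_of_nonneg_left bernoulli (rpow_nonneg hx0.le t)
  calc t * (x ^ t / x) = x ^ t - x ^ t * (1 + t * -x⁻¹) := by field_simp; ring
    _ ≤ _ := by linarith

lemma mul_rpow_neg_le_rpow_sub_rpow {p x : ℝ} (hp : 1 ≤ p) (hx : 1 < x) :
    (p - 1) * x ^ (-p) ≤ (x - 1) ^ (1 - p) - x ^ (1 - p) := by
  have ha : 0 < x - 1 := by linarith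
  have hx0 : 0 < x := by linarith
  have bernoulli : 1 + p * (x - 1)⁻¹ ≤ (1 + (x - 1)⁻¹) ^ p :=
    one_add_mul_self_le_rpow_one_add (by linarith [inv_pos.2 ha]) hp
  rw [show 1 + (x - 1)⁻¹ = x / (x - 1) by field_simp; ring, div_rpow hx0.le ha.le,
    le_div_iff₀ (rpow_pos_of_pos ha p)] at bernoulli
  have key : (x - 1 + p) * (x - 1) ^ p ≤ (x - 1) * x ^ p := by
    calc (x - 1 + p) * (x - 1) ^ p = (x - 1) * ((1 + p * (x - 1)⁻¹) * (x - 1) ^ p) := by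
          field_simp
      _ ≤ (x - 1) * x ^ p := mul_le_mul_of_nonneg_left bernoulli ha.le
  rw [rpow_sub hx0, rpow_sub ha, rpow_one, rpow_one, rpow_neg hx0.le,
    div_sub_div _ _ (rpow_pos_of_pos ha p).ne' (rpow_pos_of_pos hx0 p).ne',
    le_div_iff₀ (by positivity)]
  field_simp
  nlinarith [key]

lemma sum_range_jb_rpow_neg_le {r : ℝ} (hr0 : 0 ≤ r) (hr1 : r < 1) (K : ℕ) :
    ∑ m ∈ range (K + 1), jb m ^ (-r) ≤ (1 + 1 / (1 - r)) * jb K ^ (1 - r) := by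
  have ht : 0 < 1 - r := by linarith
  have step (i : ℕ) : jb (i + 1 : ℕ) ^ (-r) ≤
      (((i + 1 : ℕ) : ℝ) ^ (1 - r) - (i : ℝ) ^ (1 - r)) / (1 - r) := by
    have hi : (1 : ℝ) ≤ (i + 1 : ℕ) := by norm_num
    rw [le_div_iff₀ ht]
    calc jb (i + 1 : ℕ) ^ (-r) * (1 - r) ≤ ((i + 1 : ℕ) : ℝ) ^ (-r) * (1 - r) := by
          refine mul_le_mul_of_nonneg_right (rpow_le_rpow_of_nonpos (by positivity) ?_ (by linarith))
            ht.le
          exact le_jb _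
      _ ≤ _ := by
          have := mul_rpow_sub_one_le_rpow_sub_rpow ht.le (by linarith) hi
          rw [sub_sub_cancel_left, Nat.cast_add_one, add_sub_cancel_right] at this
          push_cast
          linarith
  calc ∑ m ∈ range (K + 1), jb m ^ (-r)
      = ∑ i ∈ range K, jb (i + 1 : ℕ) ^ (-r) + 1 := by
        rw [sum_range_succ']; simp [jb]
    _ ≤ (K : ℝ) ^ (1 - r) / (1 - r) + 1 := by
        gcongr
        refine (sum_le_sum fun i _ => step i).trans_eq ?_
        rw [← sum_div, sum_range_sub (fun i => (i : ℝ) ^ (1 - r))]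
        simp [zero_rpow ht.ne']
    _ ≤ jb K ^ (1 - r) / (1 - r) + jb K ^ (1 - r) := by
        gcongr
        · exact le_jb _
        · exact one_le_rpow (one_le_jb _) ht.le
    _ = (1 + 1 / (1 - r)) * jb K ^ (1 - r) := by ring

lemma sum_Ico_jb_rpow_neg_le {p : ℝ} (hp : 1 < p) (K N : ℕ) :
    ∑ m ∈ Ico (K + 1) N, jb m ^ (-p) ≤ 2 ^ p / (p - 1) * jb K ^ (1 - p) := by
  have hp1 : 0 < p - 1 := by linarith
  set f : ℕ → ℝ := fun m => (m : ℝ) ^ (1 - p)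
  have step {m : ℕ} (hm : 1 ≤ m) : jb m ^ (-p) ≤ 2 ^ p / (p - 1) * (f m - f (m + 1)) := by
    have hm1 : (1 : ℝ) < m + 1 := by exact_mod_cast Nat.lt_succ_of_le hm
    have tele := mul_rpow_neg_le_rpow_sub_rpow hp.le hm1
    rw [add_sub_cancel_right] at tele
    calc jb m ^ (-p) ≤ ((m + 1 : ℝ) / 2) ^ (-p) :=
          rpow_le_rpow_of_nonpos (by positivity)
            (by linarith [add_one_le_two_mul_jb m]) (by linarith)
      _ = 2 ^ p * (m + 1 : ℝ) ^ (-p) := by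
          rw [div_rpow (by positivity) zero_le_two, rpow_neg zero_le_two, div_inv_eq_mul, mul_comm]
      _ ≤ 2 ^ p / (p - 1) * (f m - f (m + 1)) := by
          simp only [f]; push_cast
          rw [div_mul_eq_mul_div, le_div_iff₀ hp1, mul_assoc]
          gcongr
          linarith
  rcases le_or_gt N (K + 1) with hN | hN
  · rw [Ico_eq_empty_of_le hN, sum_empty]
    exact mul_nonneg (div_nonneg (by positivity) hp1.le) (rpow_nonneg (jb_pos _).le _)
  calc ∑ m ∈ Ico (K + 1) N, jb m ^ (-p)
      ≤ ∑ m ∈ Ico (K + 1) N, 2 ^ p / (p - 1) * (f m - f (m + 1)) :=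
        sum_le_sum fun m hm => step (by linarith [(mem_Ico.1 hm).1])
    _ = 2 ^ p / (p - 1) * (f (K + 1) - f N) := by
        rw [← mul_sum, ← neg_sub (f N), ← sum_Ico_sub f hN.le, ← sum_neg_distrib]
        simp_rw [neg_sub]
    _ ≤ 2 ^ p / (p - 1) * jb K ^ (1 - p) := by
        gcongr
        calc f (K + 1) - f N ≤ f (K + 1) := sub_le_self _ (by positivity)
          _ ≤ jb K ^ (1 - p) := by
            simp only [f]; push_cast
            exact rpow_le_rpow_of_nonpos (jb_pos _) (jb_le_add_one (Nat.cast_nonneg _)) (by linarith)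

lemma sum_natAbs_le_two_mul_sum_image (g : ℕ → ℝ) (hg : ∀ m, 0 ≤ g m) (u : Finset ℤ) :
    ∑ n ∈ u, g n.natAbs ≤ 2 * ∑ m ∈ u.image Int.natAbs, g m := by
  rw [sum_comp, mul_sum]
  refine sum_le_sum fun m _ => ?_
  rw [nsmul_eq_mul]
  refine mul_le_mul_of_nonneg_right ?_ (hg m)
  have hfiber : {n ∈ u | n.natAbs = m} ⊆ {(m : ℤ), -(m : ℤ)} := by
    intro n hn
    rw [mem_filter] at hn
    rw [mem_insert, mem_singleton]
    omega
  exact_mod_cast (card_le_card hfiber).trans card_le_two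

lemma sum_jb_rpow_neg_le_of_natAbs_le {r : ℝ} (hr0 : 0 ≤ r) (hr1 : r < 1) {K : ℕ}
    {u : Finset ℤ} (hu : ∀ n ∈ u, n.natAbs ≤ K) :
    ∑ n ∈ u, jb n ^ (-r) ≤ 2 * (1 + 1 / (1 - r)) * jb K ^ (1 - r) := by
  have hsub : u.image Int.natAbs ⊆ range (K + 1) := by
    intro m hm
    obtain ⟨n, hn, rfl⟩ := mem_image.1 hm
    exact mem_range.2 (Nat.lt_succ_of_le (hu n hn))
  simp_rw [← jb_natAbs]
  calc _ ≤ 2 * ∑ m ∈ u.image Int.natAbs, jb m ^ (-r) :=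
        sum_natAbs_le_two_mul_sum_image _ (fun m => rpow_nonneg (jb_pos _).le _) u
    _ ≤ 2 * ∑ m ∈ range (K + 1), jb m ^ (-r) := by
        gcongr
        exact fun m _ _ => rpow_nonneg (jb_pos _).le _
    _ ≤ _ := by
        rw [mul_assoc]
        gcongr
        exact sum_range_jb_rpow_neg_le hr0 hr1 K

lemma sum_jb_rpow_neg_le_of_lt_natAbs {p : ℝ} (hp : 1 < p) {K : ℕ}
    {u : Finset ℤ} (hu : ∀ n ∈ u, K < n.natAbs) :
    ∑ n ∈ u, jb n ^ (-p) ≤ 2 * (2 ^ p / (p - 1)) * jb K ^ (1 - p) := by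
  have hsub : u.image Int.natAbs ⊆ Ico (K + 1) (u.sup Int.natAbs + 1) := by
    intro m hm
    obtain ⟨n, hn, rfl⟩ := mem_image.1 hm
    exact mem_Ico.2 ⟨hu n hn, Nat.lt_succ_of_le (le_sup hn)⟩
  simp_rw [← jb_natAbs]
  calc _ ≤ 2 * ∑ m ∈ u.image Int.natAbs, jb m ^ (-p) :=
        sum_natAbs_le_two_mul_sum_image _ (fun m => rpow_nonneg (jb_pos _).le _) u
    _ ≤ 2 * ∑ m ∈ Ico (K + 1) (u.sup Int.natAbs + 1), jb m ^ (-p) := by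
        gcongr
        exact fun m _ _ => rpow_nonneg (jb_pos _).le _
    _ ≤ _ := by
        rw [mul_assoc]
        gcongr
        exact sum_Ico_jb_rpow_neg_le hp K _

lemma jb_add_rpow_le {a b x r : ℝ} (hr : 0 ≤ r) (ha : |a| ≤ |x|) (hb : |b| ≤ |x|) :
    jb (a + b) ^ r ≤ 2 ^ r * jb x ^ r := by
  rw [← mul_rpow zero_le_two (jb_pos x).le]
  refine rpow_le_rpow (jb_pos _).le ?_ hr
  linarith [jb_add_le a b, jb_le_jb ha, jb_le_jb hb]

lemma jb_rpow_neg_le {x y q : ℝ} (hq : 0 ≤ q) (h : x ^ 2 ≤ y) :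
    jb y ^ (-q) ≤ 2 ^ q * jb x ^ (-(2 * q)) := by
  have hy : jb x ^ 2 / 2 ≤ jb y := by linarith [jb_sq_le_two_mul_jb h]
  calc jb y ^ (-q) ≤ (jb x ^ 2 / 2) ^ (-q) :=
        rpow_le_rpow_of_nonpos (by have := jb_pos x; positivity) hy (by linarith)
    _ = 2 ^ q * jb x ^ (-(2 * q)) := by
        rw [div_rpow (by positivity) zero_le_two, rpow_neg zero_le_two, div_inv_eq_mul,
          ← rpow_natCast, ← rpow_mul (jb_pos x).le, mul_comm]
        norm_num

noncomputable def diagSummand (r q : ℝ) (k n : ℤ) : ℝ :=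
  jb ((n : ℝ) + (k : ℝ)) ^ r * jb (n : ℝ) ^ (-r) *
    jb ((k : ℝ) ^ 2 + ((n : ℝ) + (k : ℝ)) ^ 2 + (n : ℝ) ^ 2) ^ (-q)

lemma diagSummand_le {r q x : ℝ} (hr : 0 ≤ r) (hq : 0 ≤ q) {k n : ℤ} (hn : |(n : ℝ)| ≤ |x|)
    (hk : |(k : ℝ)| ≤ |x|) (hx : x ^ 2 ≤ (k : ℝ) ^ 2 + ((n : ℝ) + (k : ℝ)) ^ 2 + (n : ℝ) ^ 2) :
    diagSummand r q k n ≤ 2 ^ (r + q) * jb x ^ (r - 2 * q) * jb n ^ (-r) := by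
  have hjx := jb_pos x
  calc diagSummand r q k n ≤ 2 ^ r * jb x ^ r * jb n ^ (-r) * (2 ^ q * jb x ^ (-(2 * q))) := by
        have hjn := rpow_pos_of_pos (jb_pos n) (-r)
        refine mul_le_mul (mul_le_mul_of_nonneg_right (jb_add_rpow_le hr hn hk) hjn.le)
          (jb_rpow_neg_le hq hx) (rpow_pos_of_pos (jb_pos _) _).le (by positivity)
    _ = 2 ^ (r + q) * jb x ^ (r - 2 * q) * jb n ^ (-r) := by
        rw [rpow_add two_pos, sub_eq_add_neg, rpow_add hjx]
        ring

lemma sum_diagSummand_le_of_natAbs_le {r q : ℝ} (hr0 : 0 ≤ r) (hr1 : r < 1) (hq : 0 ≤ q)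
    (k : ℤ) {u : Finset ℤ} (hu : ∀ n ∈ u, n.natAbs ≤ k.natAbs) :
    ∑ n ∈ u, diagSummand r q k n ≤ 2 ^ (r + q) * (2 * (1 + 1 / (1 - r))) * jb k ^ (1 - 2 * q) := by
  have hjk := jb_pos k
  calc ∑ n ∈ u, diagSummand r q k n
      ≤ ∑ n ∈ u, 2 ^ (r + q) * jb k ^ (r - 2 * q) * jb n ^ (-r) :=
        sum_le_sum fun n hn => diagSummand_le hr0 hq (abs_intCast_le_abs_intCast (hu n hn)) le_rfl
          (by nlinarith)
    _ = 2 ^ (r + q) * jb k ^ (r - 2 * q) * ∑ n ∈ u, jb n ^ (-r) := by rw [mul_sum]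
    _ ≤ 2 ^ (r + q) * jb k ^ (r - 2 * q) * (2 * (1 + 1 / (1 - r)) * jb k ^ (1 - r)) := by
        gcongr
        rw [← jb_natAbs k]
        exact sum_jb_rpow_neg_le_of_natAbs_le hr0 hr1 hu
    _ = 2 ^ (r + q) * (2 * (1 + 1 / (1 - r))) * jb k ^ (1 - 2 * q) := by
        rw [show 1 - 2 * q = (r - 2 * q) + (1 - r) by ring, rpow_add hjk]
        ring

lemma sum_diagSummand_le_of_natAbs_lt {r q : ℝ} (hr : 0 ≤ r) (hq : 1 / 2 < q)
    (k : ℤ) {u : Finset ℤ} (hu : ∀ n ∈ u, k.natAbs < n.natAbs) :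
    ∑ n ∈ u, diagSummand r q k n ≤
      2 ^ (r + q) * (2 * (2 ^ (q + 1 / 2) / (q - 1 / 2))) * jb k ^ (1 - 2 * q) := by
  have hjk := jb_pos k
  have pointwise (n : ℤ) (hn : k.natAbs < n.natAbs) :
      diagSummand r q k n ≤ 2 ^ (r + q) * jb k ^ (1 / 2 - q) * jb n ^ (-(q + 1 / 2)) := by
    have hkn := abs_intCast_le_abs_intCast hn.le
    calc diagSummand r q k n ≤ 2 ^ (r + q) * jb n ^ (r - 2 * q) * jb n ^ (-r) :=
          diagSummand_le hr (by linarith) le_rfl hkn (by nlinarith)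
      _ = 2 ^ (r + q) * jb n ^ (1 / 2 - q) * jb n ^ (-(q + 1 / 2)) := by
          rw [mul_assoc, mul_assoc, ← rpow_add (jb_pos n), ← rpow_add (jb_pos n)]
          ring_nf
      _ ≤ 2 ^ (r + q) * jb k ^ (1 / 2 - q) * jb n ^ (-(q + 1 / 2)) := by
          refine mul_le_mul_of_nonneg_right (mul_le_mul_of_nonneg_left ?_ (by positivity))
            (rpow_pos_of_pos (jb_pos n) _).le
          exact rpow_le_rpow_of_nonpos hjk (jb_le_jb hkn) (by linarith)
  calc ∑ n ∈ u, diagSummand r q k n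
      ≤ ∑ n ∈ u, 2 ^ (r + q) * jb k ^ (1 / 2 - q) * jb n ^ (-(q + 1 / 2)) :=
        sum_le_sum fun n hn => pointwise n (hu n hn)
    _ = 2 ^ (r + q) * jb k ^ (1 / 2 - q) * ∑ n ∈ u, jb n ^ (-(q + 1 / 2)) := by rw [mul_sum]
    _ ≤ 2 ^ (r + q) * jb k ^ (1 / 2 - q) *
          (2 * (2 ^ (q + 1 / 2) / (q + 1 / 2 - 1)) * jb k ^ (1 - (q + 1 / 2))) := by
        gcongr
        rw [← jb_natAbs k]
        exact sum_jb_rpow_neg_le_of_lt_natAbs (by linarith) hu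
    _ = 2 ^ (r + q) * (2 * (2 ^ (q + 1 / 2) / (q - 1 / 2))) * jb k ^ (1 - 2 * q) := by
        rw [show 1 - 2 * q = (1 / 2 - q) + (1 - (q + 1 / 2)) by ring, rpow_add hjk,
          show q + 1 / 2 - 1 = q - 1 / 2 by ring]
        ring

theorem stmt12_general (σ ε : ℝ) (hσ0 : 0 ≤ σ) (hσ : σ < 1 / 2) (hε : ε < 1 / 4) :
    ∃ C : ℝ, 0 < C ∧ ∀ k : ℤ,
      (∑' n : ℤ, jb ((n : ℝ) + (k : ℝ)) ^ (2 * σ) * jb (n : ℝ) ^ (-(2 * σ)) *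
          jb ((k : ℝ) ^ 2 + ((n : ℝ) + (k : ℝ)) ^ 2 + (n : ℝ) ^ 2) ^ (-(1 - 2 * ε)))
        ≤ C * jb (k : ℝ) ^ (-(1 - 4 * ε)) := by
  have hr : 0 < 1 - 2 * σ := by linarith
  have hq : 0 < 1 - 2 * ε - 1 / 2 := by linarith
  refine ⟨2 ^ (2 * σ + (1 - 2 * ε)) * (2 * (1 + 1 / (1 - 2 * σ))) +
    2 ^ (2 * σ + (1 - 2 * ε)) * (2 * (2 ^ (1 - 2 * ε + 1 / 2) / (1 - 2 * ε - 1 / 2))),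
    by positivity, fun k => ?_⟩
  have hjk := jb_pos k
  rw [show -(1 - 4 * ε) = 1 - 2 * (1 - 2 * ε) by ring]
  refine tsum_le_of_sum_le' (by positivity) fun u => ?_
  rw [← sum_filter_add_sum_filter_not u (fun n => n.natAbs ≤ k.natAbs), add_mul]
  exact add_le_add
    (sum_diagSummand_le_of_natAbs_le (by linarith) (by linarith) (by linarith) k
      fun n hn => (mem_filter.1 hn).2)
    (sum_diagSummand_le_of_natAbs_lt (by linarith) (by linarith) k
      fun n hn => not_le.1 (mem_filter.1 hn).2)

/-- diagonal case `m = k` of the bilinear estimate.  For `0 ≤ σ < 1/2` and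
`0 < ε < 1/4` there is `C > 0` with
`∑_{n∈ℤ} ⟨n+k⟩^{2σ} ⟨n⟩^{-2σ} ⟨k² + (n+k)² + n²⟩^{-(1-2ε)} ≤ C ⟨k⟩^{-(1-4ε)}` for all `k ∈ ℤ`. -/
theorem stmt12 (σ ε : ℝ) (hσ0 : 0 ≤ σ) (hσ : σ < 1 / 2) (hε0 : 0 < ε) (hε : ε < 1 / 4) :
    ∃ C : ℝ, 0 < C ∧ ∀ k : ℤ,
      (∑' n : ℤ, jb ((n : ℝ) + (k : ℝ)) ^ (2 * σ) * jb (n : ℝ) ^ (-(2 * σ)) *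
          jb ((k : ℝ) ^ 2 + ((n : ℝ) + (k : ℝ)) ^ 2 + (n : ℝ) ^ 2) ^ (-(1 - 2 * ε)))
        ≤ C * jb (k : ℝ) ^ (-(1 - 4 * ε)) :=
  stmt12_general σ ε hσ0 hσ hε
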